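/- There exists a constant C > 0 such that for every n ≥ 1 and every word A^(n) = (A₁,…,A_n) ∈ 𝒜ⁿ, sup_{x∈[0,1]} |h_{A^(n)}'(x)| ≤ C · inf_{x∈[0,1]} |h_{A^(n)}'(x)|. -/

import Mathlib

open MeasureTheory Real Set Filter Topology

namespace SCF

/-- The involution `ι(x) = (1−x)/(1+x)`. -/
noncomputable def iota (x : ℝ) : ℝ := (1 - x) / (1 + x)

/-- Even continued-fraction step.  For `y ∈ (0,1/2]` one has
`⌊(1/y+1)/2⌋ = k` whenever `1/y ∈ (2k−1, 2k+1)`, so `Te y = |1/y − 2k|`;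
explicitly `Te y = 1/y − 2` on `[1/3,1/2]`, `Te y = 1/y − 2k` on
`[1/(2k+1), 1/(2k))` and `Te y = 2k − 1/y` on `[1/(2k), 1/(2k−1))` (`k ≥ 2`). -/
noncomputable def Te (y : ℝ) : ℝ := |1 / y - 2 * (⌊(1 / y + 1) / 2⌋ : ℝ)|

/-- The spliced continued fraction (SCF) map `T : [0,1] → [0,1]`, with
`T 0 = 0`, `T 1 = 1`.  On `(0,1/2]` it is the even continued fraction map
(see `Te`), and on `(1/2,1)` it is the odd–odd map, which is the conjugate
`ι ∘ Te ∘ ι` of the even map; this agrees with the branchwise definition: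
`T x = (k x − (k−1))/(k − (k+1) x)` on `((k−1)/k, (2k−1)/(2k+1)]` and
`T x = (k − (k+1) x)/(k x − (k−1))` on `((2k−1)/(2k+1), k/(k+1)]` for `k ≥ 2`. -/
noncomputable def T (x : ℝ) : ℝ :=
  if x ≤ 0 then 0
  else if 1 ≤ x then 1
  else if x ≤ 1 / 2 then Te x
  else iota (Te (iota x))

/-- Parity label of a digit: `e` (even cusp) or `o` (odd–odd cusp). -/
inductive Par | e | o
deriving DecidableEq

/-- A candidate SCF digit `(a, ε)_s`. -/
structure Digit where
  a : ℤ
  eps : ℤ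
  s : Par
deriving DecidableEq

/-- The digit set `𝒜 = {(k,ε)_s : k ≥ 2, ε = ±1, s ∈ {e,o}} ∪ {(1,+1)_e}`. -/
def Digit.Valid (d : Digit) : Prop :=
  (2 ≤ d.a ∧ (d.eps = 1 ∨ d.eps = -1)) ∨ (d.a = 1 ∧ d.eps = 1 ∧ d.s = Par.e)

/-- The branch intervals `I_{(a,ε)_s}` of the SCF map. -/
noncomputable def branch (d : Digit) : Set ℝ :=
  match d.s with
  | Par.e =>
      if d.a = 1 then Set.Icc (1/3 : ℝ) (1/2)
      else if d.eps = 1 then Set.Ico (1 / (2 * (d.a : ℝ) + 1)) (1 / (2 * (d.a : ℝ)))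
      else Set.Ico (1 / (2 * (d.a : ℝ))) (1 / (2 * (d.a : ℝ) - 1))
  | Par.o =>
      if d.eps = 1 then
        Set.Ioc ((2 * (d.a : ℝ) - 1) / (2 * (d.a : ℝ) + 1)) ((d.a : ℝ) / ((d.a : ℝ) + 1))
      else
        Set.Ioc (((d.a : ℝ) - 1) / (d.a : ℝ)) ((2 * (d.a : ℝ) - 1) / (2 * (d.a : ℝ) + 1))

open Classical in
/-- The SCF digit of a point `y` (the unique valid digit `d` with `y ∈ I_d`;
well defined for every `y ∈ (0,1)`). -/
noncomputable def digit (y : ℝ) : Digit :=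
  if h : ∃ d : Digit, d.Valid ∧ y ∈ branch d then h.choose else ⟨1, 1, Par.e⟩

/-- The `n`-th SCF digit `(a_n(x), ε_n(x))_{s_n(x)}` of `x`, `n ≥ 1`,
determined by `T^[n−1] x ∈ I_{(a_n,ε_n)_{s_n}}`. -/
noncomputable def dig (n : ℕ) (x : ℝ) : Digit := digit (T^[n - 1] x)

/-- The `n`-th SCF partial quotient `a_n(x)`. -/
noncomputable def a (n : ℕ) (x : ℝ) : ℤ := (dig n x).a

/-- The invariant density `f_μ`. -/
noncomputable def fdens (x : ℝ) : ℝ :=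
  2 / (Real.log (2 + Real.sqrt 3) * (1 - (2 - Real.sqrt 3) * x) * (1 + Real.sqrt 3 * x))

/-- The absolutely continuous `T`-invariant probability measure `μ` on `(0,1)`. -/
noncomputable def mu : Measure ℝ :=
  (volume.restrict (Set.Ioo (0 : ℝ) 1)).withDensity fun x => ENNReal.ofReal (fdens x)

/-- The inverse branches `h_{(a,ε)_s}` of the SCF map `T`. -/
noncomputable def h (d : Digit) (x : ℝ) : ℝ :=
  match d.s with
  | Par.e => 1 / (2 * (d.a : ℝ) + (d.eps : ℝ) * x)
  | Par.o =>
      if d.eps = 1 then (((d.a : ℝ) - 1) * x + (d.a : ℝ)) / ((d.a : ℝ) * x + ((d.a : ℝ) + 1))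
      else ((d.a : ℝ) * x + ((d.a : ℝ) - 1)) / (((d.a : ℝ) + 1) * x + (d.a : ℝ))

/-- Composed inverse branch `h_{A^{(n)}} = h_{A₁} ∘ ⋯ ∘ h_{A_n}` of a word. -/
noncomputable def hWord (l : List Digit) : ℝ → ℝ :=
  l.foldr (fun d g => h d ∘ g) id

/-- The dual inverse branches `bar h_{(b,η)_t}`. -/
noncomputable def hbar (d : Digit) (y : ℝ) : ℝ :=
  match d.s with
  | Par.e => (d.eps : ℝ) / (2 * (d.a : ℝ) + y)
  | Par.o =>
      1 / (1 + (d.eps : ℝ) / (((d.a : ℝ) - ((max 0 d.eps : ℤ) : ℝ)) + 1 / (1 + y)))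

/-- The matrix `M_{(a,ε)_s}` associated with the inverse branch `h_{(a,ε)_s}`. -/
noncomputable def Mdig (d : Digit) : Matrix (Fin 2) (Fin 2) ℝ :=
  match d.s with
  | Par.e => !![0, 1; (d.eps : ℝ), 2 * (d.a : ℝ)]
  | Par.o =>
      !![(d.a : ℝ) - ((max 0 d.eps : ℤ) : ℝ), (d.a : ℝ) - ((max 0 d.eps : ℤ) : ℝ) + (d.eps : ℝ);
         (d.a : ℝ) - ((max 0 d.eps : ℤ) : ℝ) + 1, (d.a : ℝ) - ((max 0 d.eps : ℤ) : ℝ) + (d.eps : ℝ) + 1]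

/-- `M_n(x) = M_{(a₁,ε₁)_{s₁}} ⋯ M_{(a_n,ε_n)_{s_n}}`. -/
noncomputable def Mn (n : ℕ) (x : ℝ) : Matrix (Fin 2) (Fin 2) ℝ :=
  ((List.range n).map fun i => Mdig (digit (T^[i] x))).prod

/-- `P_n(x)`: the `(1,2)`-entry of `M_n(x)` (numerator of the `n`-th convergent). -/
noncomputable def Pc (n : ℕ) (x : ℝ) : ℝ := Mn n x 0 1

/-- `Q_n(x)`: the `(2,2)`-entry of `M_n(x)` (denominator of the `n`-th convergent). -/
noncomputable def Qc (n : ℕ) (x : ℝ) : ℝ := Mn n x 1 1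

/-!
Each inverse branch `h d` is the Möbius map of the matrix `Mdig d`, of determinant `±1`, whose
denominator `D(x) = c x + e` is at least `2` on `[0,1]` and satisfies `|c| ≤ (3/2) D(x)`. Hence
`h d` is a `1/4`-contraction of `[0,1]`, and its derivative `±1/D²` has log-distortion at most
`3 |x - y|`. Along a word the log-distortions of the factors add up over images whose diameters
shrink by the factor `1/4` at each step, so the total is at most `3 · 4/3 = 4`.
-/

open scoped NNReal

noncomputable def mobius (M : Matrix (Fin 2) (Fin 2) ℝ) (x : ℝ) : ℝ :=
  (M 0 0 * x + M 0 1) / (M 1 0 * x + M 1 1)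

section Mobius

variable {M : Matrix (Fin 2) (Fin 2) ℝ} {x y : ℝ}

theorem hasDerivAt_mobius (hx : M 1 0 * x + M 1 1 ≠ 0) :
    HasDerivAt (mobius M) (M.det / (M 1 0 * x + M 1 1) ^ 2) x := by
  have hnum := ((hasDerivAt_id x).const_mul (M 0 0)).add_const (M 0 1)
  have hden := ((hasDerivAt_id x).const_mul (M 1 0)).add_const (M 1 1)
  refine (hnum.div hden hx).congr_deriv ?_
  rw [Matrix.det_fin_two]
  simp only [id, mul_one]
  ring

theorem mobius_sub_mobius (hx : M 1 0 * x + M 1 1 ≠ 0) (hy : M 1 0 * y + M 1 1 ≠ 0) :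
    mobius M x - mobius M y =
      M.det * (x - y) / ((M 1 0 * x + M 1 1) * (M 1 0 * y + M 1 1)) := by
  rw [mobius, mobius, Matrix.det_fin_two, div_sub_div _ _ hx hy]
  ring

theorem abs_deriv_mobius_le {κ : ℝ} (hx : 0 < M 1 0 * x + M 1 1) (hy : 0 < M 1 0 * y + M 1 1)
    (hκ : |M 1 0| ≤ κ * (M 1 0 * x + M 1 1)) :
    |deriv (mobius M) x| ≤ exp (2 * κ * |x - y|) * |deriv (mobius M) y| := by
  set Dx := M 1 0 * x + M 1 1
  set Dy := M 1 0 * y + M 1 1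
  have hDy : Dy ≤ Dx * exp (κ * |x - y|) :=
    calc Dy = Dx + M 1 0 * (y - x) := by ring
      _ ≤ Dx + |M 1 0| * |x - y| := by
          rw [abs_sub_comm, ← abs_mul]; gcongr; exact le_abs_self _
      _ ≤ Dx * (κ * |x - y| + 1) := by nlinarith [abs_nonneg (x - y)]
      _ ≤ Dx * exp (κ * |x - y|) := by gcongr; exact add_one_le_exp _
  rw [(hasDerivAt_mobius hx.ne').deriv, (hasDerivAt_mobius hy.ne').deriv, abs_div, abs_div,
    abs_of_pos (pow_pos hx 2), abs_of_pos (pow_pos hy 2), mul_div_assoc',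
    div_le_div_iff₀ (pow_pos hx 2) (pow_pos hy 2), mul_assoc, mul_comm (rexp _), mul_assoc,
    show 2 * κ * |x - y| = κ * |x - y| + κ * |x - y| by ring, exp_add]
  gcongr
  nlinarith [pow_le_pow_left₀ hy.le hDy 2]

end Mobius

section Digit

variable {d : Digit} {x : ℝ}

theorem Digit.Valid.classify (hd : d.Valid) :
    (d.s = .e ∧ d.eps = 1 ∧ (1 : ℝ) ≤ d.a) ∨ (d.s = .e ∧ d.eps = -1 ∧ (2 : ℝ) ≤ d.a) ∨
      (d.s = .o ∧ d.eps = 1 ∧ (2 : ℝ) ≤ d.a) ∨ (d.s = .o ∧ d.eps = -1 ∧ (2 : ℝ) ≤ d.a) := by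
  obtain ⟨a, ε, s⟩ := d
  have hcast : (2 : ℤ) ≤ a → (2 : ℝ) ≤ a := fun ha => by exact_mod_cast ha
  cases s <;> rcases hd with ⟨ha, rfl | rfl⟩ | ⟨rfl, rfl, hs⟩ <;>
    simp_all only [reduceCtorEq, Int.reduceNeg, and_true, and_false, false_and, true_and, or_true,
      or_false, Int.cast_one, Std.le_refl, forall_const]
  all_goals linarith

theorem h_eq_mobius (hd : d.Valid) : h d = mobius (Mdig d) := by
  obtain ⟨a, ε, s⟩ := d
  funext x
  rcases hd.classify with ⟨rfl, rfl, -⟩ | ⟨rfl, rfl, -⟩ | ⟨rfl, rfl, -⟩ | ⟨rfl, rfl, -⟩ <;>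
    simp only [h, mobius, ↓reduceIte, reduceCtorEq, Mdig, Matrix.of_apply, Matrix.cons_val',
      Matrix.cons_val_zero, Matrix.cons_val_one, Matrix.cons_val_fin_one, Int.reduceNeg,
      Left.neg_nonpos_iff, zero_le_one, sup_of_le_left, sup_of_le_right, Int.cast_zero,
      Int.cast_one, Int.cast_neg, sub_zero, sub_add_cancel, neg_add_cancel_right] <;>
    ring_nf

theorem Digit.Valid.exists_Mdig_eq (hd : d.Valid) : ∃ a : ℝ,
    (1 ≤ a ∧ Mdig d = !![0, 1; 1, 2 * a]) ∨ (2 ≤ a ∧ Mdig d = !![0, 1; -1, 2 * a]) ∨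
      (2 ≤ a ∧ Mdig d = !![a - 1, a; a, a + 1]) ∨ (2 ≤ a ∧ Mdig d = !![a, a - 1; a + 1, a]) := by
  obtain ⟨a, ε, s⟩ := d
  refine ⟨a, ?_⟩
  rcases hd.classify with ⟨rfl, rfl, ha⟩ | ⟨rfl, rfl, ha⟩ | ⟨rfl, rfl, ha⟩ | ⟨rfl, rfl, ha⟩
  exacts [Or.inl ⟨ha, by simp [Mdig]⟩, Or.inr <| Or.inl ⟨ha, by simp [Mdig]⟩,
    Or.inr <| Or.inr <| Or.inl ⟨ha, by simp [Mdig]⟩,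
    Or.inr <| Or.inr <| Or.inr ⟨ha, by simp [Mdig, ← sub_eq_add_neg]⟩]

theorem abs_det_Mdig (hd : d.Valid) : |(Mdig d).det| = 1 := by
  obtain ⟨a, ⟨-, hM⟩ | ⟨-, hM⟩ | ⟨-, hM⟩ | ⟨-, hM⟩⟩ := hd.exists_Mdig_eq <;>
    rw [hM, Matrix.det_fin_two_of] <;> ring_nf <;> norm_num

theorem two_le_denom_Mdig (hd : d.Valid) (hx : x ∈ Icc (0 : ℝ) 1) :
    2 ≤ Mdig d 1 0 * x + Mdig d 1 1 := by
  obtain ⟨a, ⟨ha, hM⟩ | ⟨ha, hM⟩ | ⟨ha, hM⟩ | ⟨ha, hM⟩⟩ := hd.exists_Mdig_eq <;>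
    simp only [hM, Matrix.of_apply, Matrix.cons_val', Matrix.cons_val_zero, Matrix.cons_val_one,
      Matrix.cons_val_fin_one] <;>
    nlinarith [hx.1, hx.2]

theorem abs_Mdig_one_zero_le (hd : d.Valid) (hx : x ∈ Icc (0 : ℝ) 1) :
    |Mdig d 1 0| ≤ 3 / 2 * (Mdig d 1 0 * x + Mdig d 1 1) := by
  obtain ⟨a, ⟨ha, hM⟩ | ⟨ha, hM⟩ | ⟨ha, hM⟩ | ⟨ha, hM⟩⟩ := hd.exists_Mdig_eq <;>
    simp only [hM, Matrix.of_apply, Matrix.cons_val', Matrix.cons_val_zero, Matrix.cons_val_one,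
      Matrix.cons_val_fin_one, abs_one, abs_neg]
  all_goals first
    | rw [abs_of_nonneg (by linarith)]; nlinarith [hx.1, hx.2]
    | nlinarith [hx.1, hx.2]

theorem numer_Mdig_mem_Icc (hd : d.Valid) (hx : x ∈ Icc (0 : ℝ) 1) :
    Mdig d 0 0 * x + Mdig d 0 1 ∈ Icc 0 (Mdig d 1 0 * x + Mdig d 1 1) := by
  obtain ⟨a, ⟨ha, hM⟩ | ⟨ha, hM⟩ | ⟨ha, hM⟩ | ⟨ha, hM⟩⟩ := hd.exists_Mdig_eq <;>
    simp only [hM, Matrix.of_apply, Matrix.cons_val', Matrix.cons_val_zero, Matrix.cons_val_one,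
      Matrix.cons_val_fin_one, mem_Icc] <;>
    constructor <;> nlinarith [hx.1, hx.2]

theorem mapsTo_h (hd : d.Valid) : MapsTo (h d) (Icc 0 1) (Icc 0 1) := by
  intro x hx
  obtain ⟨hnum0, hnum1⟩ := numer_Mdig_mem_Icc hd hx
  have hden := two_le_denom_Mdig hd hx
  rw [h_eq_mobius hd, mobius]
  exact ⟨div_nonneg hnum0 (by linarith), div_le_one_of_le₀ hnum1 (by linarith)⟩

theorem lipschitzOnWith_h (hd : d.Valid) : LipschitzOnWith (1 / 4) (h d) (Icc 0 1) := by
  refine LipschitzOnWith.of_dist_le_mul fun x hx y hy => ?_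
  have hDx := two_le_denom_Mdig hd hx
  have hDy := two_le_denom_Mdig hd hy
  rw [Real.dist_eq, Real.dist_eq, h_eq_mobius hd, mobius_sub_mobius (by linarith) (by linarith),
    abs_div, abs_mul, abs_det_Mdig hd, one_mul,
    abs_of_pos (mul_pos (by linarith : (0 : ℝ) < _) (by linarith : (0 : ℝ) < _)),
    div_le_iff₀ (by nlinarith)]
  push_cast
  nlinarith [abs_nonneg (x - y), mul_le_mul hDx hDy (by norm_num) (by linarith)]

theorem differentiableAt_h (hd : d.Valid) (hx : x ∈ Icc (0 : ℝ) 1) :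
    DifferentiableAt ℝ (h d) x := by
  rw [h_eq_mobius hd]
  exact (hasDerivAt_mobius (by linarith [two_le_denom_Mdig hd hx])).differentiableAt

theorem abs_deriv_h_le (hd : d.Valid) {y : ℝ} (hx : x ∈ Icc (0 : ℝ) 1) (hy : y ∈ Icc (0 : ℝ) 1) :
    |deriv (h d) x| ≤ exp (3 * |x - y|) * |deriv (h d) y| := by
  rw [h_eq_mobius hd, show (3 : ℝ) = 2 * (3 / 2) by norm_num]
  exact abs_deriv_mobius_le (by linarith [two_le_denom_Mdig hd hx])
    (by linarith [two_le_denom_Mdig hd hy]) (abs_Mdig_one_zero_le hd hx)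

end Digit

section Composition

variable {ι : Type*} {f : ι → ℝ → ℝ} {P : ι → Prop} {s : Set ℝ}

theorem mapsTo_foldr_comp (hmaps : ∀ i, P i → MapsTo (f i) s s) (l : List ι)
    (hl : ∀ i ∈ l, P i) : MapsTo (l.foldr (fun i g => f i ∘ g) id) s s := by
  induction l with
  | nil => exact mapsTo_id s
  | cons i l ih =>
    rw [List.forall_mem_cons] at hl
    exact (hmaps i hl.1).comp (ih hl.2)

theorem lipschitzOnWith_foldr_comp {θ : ℝ≥0} (hmaps : ∀ i, P i → MapsTo (f i) s s)
    (hlip : ∀ i, P i → LipschitzOnWith θ (f i) s) (l : List ι) (hl : ∀ i ∈ l, P i) :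
    LipschitzOnWith (θ ^ l.length) (l.foldr (fun i g => f i ∘ g) id) s := by
  induction l with
  | nil =>
    simpa only [List.length_nil, pow_zero, List.foldr_nil] using LipschitzWith.id.lipschitzOnWith
  | cons i l ih =>
    rw [List.forall_mem_cons] at hl
    rw [List.length_cons, pow_succ']
    exact (hlip i hl.1).comp (ih hl.2) (mapsTo_foldr_comp hmaps l hl.2)

theorem differentiableAt_foldr_comp (hmaps : ∀ i, P i → MapsTo (f i) s s)
    (hdiff : ∀ i, P i → ∀ x ∈ s, DifferentiableAt ℝ (f i) x) (l : List ι)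
    (hl : ∀ i ∈ l, P i) {x : ℝ} (hx : x ∈ s) :
    DifferentiableAt ℝ (l.foldr (fun i g => f i ∘ g) id) x := by
  induction l with
  | nil => exact differentiableAt_id
  | cons i l ih =>
    rw [List.forall_mem_cons] at hl
    exact (hdiff i hl.1 _ (mapsTo_foldr_comp hmaps l hl.2 hx)).comp x (ih hl.2)

theorem abs_deriv_foldr_comp_le {θ : ℝ≥0} {K : ℝ} (hK : 0 ≤ K)
    (hmaps : ∀ i, P i → MapsTo (f i) s s) (hlip : ∀ i, P i → LipschitzOnWith θ (f i) s)
    (hdiff : ∀ i, P i → ∀ x ∈ s, DifferentiableAt ℝ (f i) x)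
    (hdist : ∀ i, P i → ∀ x ∈ s, ∀ y ∈ s,
      |deriv (f i) x| ≤ exp (K * |x - y|) * |deriv (f i) y|)
    (l : List ι) (hl : ∀ i ∈ l, P i) {x y : ℝ} (hx : x ∈ s) (hy : y ∈ s) :
    |deriv (l.foldr (fun i g => f i ∘ g) id) x| ≤
      exp (K * (∑ k ∈ Finset.range l.length, (θ : ℝ) ^ k) * |x - y|) *
        |deriv (l.foldr (fun i g => f i ∘ g) id) y| := by
  induction l with
  | nil => simp
  | cons i l ih =>
    rw [List.forall_mem_cons] at hl
    have hFx := mapsTo_foldr_comp hmaps l hl.2 hx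
    have hFy := mapsTo_foldr_comp hmaps l hl.2 hy
    have hshrink := (lipschitzOnWith_foldr_comp hmaps hlip l hl.2).dist_le_mul x hx y hy
    have hdFx := differentiableAt_foldr_comp hmaps hdiff l hl.2 hx
    have hdFy := differentiableAt_foldr_comp hmaps hdiff l hl.2 hy
    replace ih := ih hl.2
    show |deriv (f i ∘ l.foldr _ id) x| ≤ _ * |deriv (f i ∘ l.foldr _ id) y|
    generalize l.foldr (fun i g => f i ∘ g) id = F at *
    rw [Real.dist_eq, Real.dist_eq, NNReal.coe_pow] at hshrink
    rw [deriv_comp x (hdiff i hl.1 _ hFx) hdFx, deriv_comp y (hdiff i hl.1 _ hFy) hdFy,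
      abs_mul, abs_mul, List.length_cons, Finset.sum_range_succ]
    calc |deriv (f i) (F x)| * |deriv F x|
        ≤ (exp (K * |F x - F y|) * |deriv (f i) (F y)|) *
            (exp (K * (∑ k ∈ Finset.range l.length, (θ : ℝ) ^ k) * |x - y|) * |deriv F y|) :=
          mul_le_mul (hdist i hl.1 _ hFx _ hFy) ih (abs_nonneg _) (by positivity)
      _ ≤ (exp (K * (θ ^ l.length * |x - y|)) * |deriv (f i) (F y)|) *
            (exp (K * (∑ k ∈ Finset.range l.length, (θ : ℝ) ^ k) * |x - y|) * |deriv F y|) := by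
          gcongr
      _ = _ := by rw [add_comm, mul_add, add_mul, exp_add]; ring_nf

end Composition

theorem csSup_image_le_mul_csInf_image {α : Type*} {g : α → ℝ} {t : Set α} {C : ℝ} (hC : 0 < C)
    (ht : t.Nonempty) (hg : ∀ x ∈ t, ∀ y ∈ t, g x ≤ C * g y) :
    sSup (g '' t) ≤ C * sInf (g '' t) := by
  refine csSup_le (ht.image g) ?_
  rintro _ ⟨x, hx, rfl⟩
  rw [← div_le_iff₀' hC]
  refine le_csInf (ht.image g) ?_
  rintro _ ⟨y, hy, rfl⟩
  rw [div_le_iff₀' hC]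
  exact hg x hx y hy

theorem abs_deriv_hWord_le {l : List Digit} (hl : ∀ d ∈ l, d.Valid) {x y : ℝ}
    (hx : x ∈ Icc (0 : ℝ) 1) (hy : y ∈ Icc (0 : ℝ) 1) :
    |deriv (hWord l) x| ≤ exp 4 * |deriv (hWord l) y| := by
  have hdist := abs_deriv_foldr_comp_le (by norm_num) (fun _ => mapsTo_h)
    (fun _ => lipschitzOnWith_h) (fun _ hd _ => differentiableAt_h hd)
    (fun _ hd _ hx _ hy => abs_deriv_h_le hd hx hy) l hl hx hy
  refine hdist.trans (mul_le_mul_of_nonneg_right (exp_le_exp.2 ?_) (abs_nonneg _))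
  have hgeom : ∑ k ∈ Finset.range l.length, ((1 / 4 : ℝ≥0) : ℝ) ^ k ≤ 4 / 3 := by
    rw [Finset.range_eq_Ico]
    exact (geom_sum_Ico_le_of_lt_one (by positivity) (by norm_num)).trans_eq (by norm_num)
  have hxy : |x - y| ≤ 1 := abs_sub_le_iff.2 ⟨by linarith [hx.2, hy.1], by linarith [hx.1, hy.2]⟩
  nlinarith [abs_nonneg (x - y)]

/-- uniform comparability of `|h_{A^{(n)}}'|` over `[0,1]`:
`sup |h'| ≤ C · inf |h'|`, uniformly in the word. -/
theorem sup_le_const_mul_inf :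
    ∃ C : ℝ, 0 < C ∧ ∀ l : List Digit, l ≠ [] → (∀ d ∈ l, d.Valid) →
      sSup ((fun x => |deriv (hWord l) x|) '' Set.Icc (0 : ℝ) 1) ≤
        C * sInf ((fun x => |deriv (hWord l) x|) '' Set.Icc (0 : ℝ) 1) :=
  ⟨exp 4, exp_pos 4, fun _ _ hl => csSup_image_le_mul_csInf_image (exp_pos 4)
    (nonempty_Icc.2 zero_le_one) fun _ hx _ hy => abs_deriv_hWord_le hl hx hy⟩

end SCF
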